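/- Let (V,ω) be a finite-dimensional real symplectic vector space (ω a nondegenerate skew-symmetric bilinear form) with dim V ≥ 4. Let φ : V → End(V) be a linear map such that every operator φ(z) is conformally symplectic, i.e., for each z ∈ V there exists a constant c(z) ∈ ℝ with ω(φ(z)a, b) + ω(a, φ(z)b) = c(z)·ω(a,b) for all a,b ∈ V. Suppose there exists v ∈ V with φ(a)b − φ(b)a = ω(a,b)·v for all a,b ∈ V. Then for every z ∈ V one has ω(φ(z)a, b) + ω(a, φ(z)b) = ω(v,z)·ω(a,b) for all a,b ∈ V; that is, the conformal factor of φ(z) equals ω(v,z). (This is the key step showing that a degree-one map satisfying the Tanaka prolongation condition on g₋₁ automatically satisfies it on all of the Heisenberg algebra g₋₂ ⊕ g₋₁.) -/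

import Mathlib

/-!
Choose `p, q` in the `ω`-orthogonal of `z` with `ω p q ≠ 0`; this is possible as soon as
`dim V ≥ 3`, since `z^⊥` has codimension at most one and cannot be isotropic. Writing the
conformal identities of `φ z`, `φ p`, `φ q` on the cyclic triples `(p, q)`, `(z, q)`, `(p, z)`
and using the prolongation equation, which makes `φ z p = φ p z` and `φ z q = φ q z`, all terms
except `ω p q • v` cancel, leaving `c(z) · ω p q = ω v z · ω p q`.
-/

section Orthogonal

variable {K V : Type*} [Field K] [AddCommGroup V] [Module K V]

/-- If `ω z u ≠ 0`, the kernel of `ω z` is a complement of `K ∙ u`; hence an element of that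
kernel orthogonal to `u` and (on the left) to the whole kernel is orthogonal to everything. -/
theorem finrank_ker_le_one_of_isotropic (ω : V →ₗ[K] V →ₗ[K] K)
    (hnd : ∀ x : V, (∀ y : V, ω x y = 0) → x = 0) {z u : V} (hzu : ω z u ≠ 0)
    (hiso : ∀ p q : V, ω z p = 0 → ω z q = 0 → ω p q = 0) :
    Module.finrank K (LinearMap.ker (ω z)) ≤ 1 := by
  have hker : ∀ a : V, ω z a = 0 → ω a u = 0 → a = 0 := by
    intro a ha hau
    refine hnd a fun w => ?_
    have hw : ω z (w - (ω z w / ω z u) • u) = 0 := by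
      simp only [map_sub, map_smul, smul_eq_mul]
      field_simp
      ring
    simpa only [map_sub, map_smul, smul_eq_mul, hau, mul_zero, sub_zero] using hiso a _ ha hw
  have hinj : Function.Injective ((ω.flip u).comp (LinearMap.ker (ω z)).subtype) := by
    rw [← LinearMap.ker_eq_bot, LinearMap.ker_eq_bot']
    exact fun m hm => Subtype.ext (hker m m.2 hm)
  simpa using LinearMap.finrank_le_finrank_of_injective hinj

theorem exists_orthogonal_apply_ne_zero (hdim : 3 ≤ Module.finrank K V)
    (ω : V →ₗ[K] V →ₗ[K] K)
    (hnd : ∀ x : V, (∀ y : V, ω x y = 0) → x = 0) (z : V) :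
    ∃ p q : V, ω z p = 0 ∧ ω z q = 0 ∧ ω p q ≠ 0 := by
  by_contra! hiso
  by_cases hz : z = 0
  · subst hz
    have : Nontrivial V := Module.nontrivial_of_finrank_pos (R := K) (by omega)
    obtain ⟨p, hp⟩ := exists_ne (0 : V)
    exact hp (hnd p fun q => hiso p q (by simp) (by simp))
  · obtain ⟨u, hu⟩ : ∃ u, ω z u ≠ 0 := by
      by_contra! h
      exact hz (hnd z h)
    have : FiniteDimensional K V := Module.finite_of_finrank_pos (by omega)
    have hker := finrank_ker_le_one_of_isotropic ω hnd hu hiso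
    have hrange : Module.finrank K (LinearMap.range (ω z)) ≤ 1 := by
      simpa using Submodule.finrank_le (LinearMap.range (ω z))
    have := LinearMap.finrank_range_add_finrank_ker (ω z)
    omega

end Orthogonal

section Prolongation

variable {V : Type*} [AddCommGroup V] [Module ℝ V]

def IsConformallySymplectic (ω : V →ₗ[ℝ] V →ₗ[ℝ] ℝ) (A : V →ₗ[ℝ] V) (c : ℝ) : Prop :=
  ∀ a b : V, ω (A a) b + ω a (A b) = c * ω a b

theorem IsConformallySymplectic.factor_eq {ω : V →ₗ[ℝ] V →ₗ[ℝ] ℝ}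
    (hskew : ∀ x y : V, ω x y = - ω y x) {φ : V →ₗ[ℝ] (V →ₗ[ℝ] V)} {v : V}
    (hv : ∀ a b : V, φ a b - φ b a = ω a b • v) {z p q : V} {cz cp cq : ℝ}
    (hz : IsConformallySymplectic ω (φ z) cz) (hp : IsConformallySymplectic ω (φ p) cp)
    (hq : IsConformallySymplectic ω (φ q) cq)
    (hzp : ω z p = 0) (hzq : ω z q = 0) (hpq : ω p q ≠ 0) :
    cz = ω v z := by
  have hφzp : φ z p = φ p z := by
    simpa [hzp, sub_eq_zero] using hv z p
  have hφzq : φ z q = φ q z := by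
    simpa [hzq, sub_eq_zero] using hv z q
  have hφpq : ω z (φ p q) - ω z (φ q p) = ω p q * ω z v := by
    simpa [mul_comm] using congrArg (ω z) (hv p q)
  refine mul_right_cancel₀ hpq ?_
  calc cz * ω p q = ω (φ p z) q + ω p (φ q z) := by rw [← hz p q, hφzp, hφzq]
    _ = - ω z (φ p q) - ω (φ q p) z := by
      linear_combination hp z q + hq p z + cp * hzq + cq * hskew p z - cq * hzp
    _ = ω v z * ω p q := by
      linear_combination -hskew (φ q p) z - hφpq - ω p q * hskew z v

end Prolongation

theorem stmt_2 (V : Type*) [AddCommGroup V] [Module ℝ V] [FiniteDimensional ℝ V]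
    (hdim : 4 ≤ Module.finrank ℝ V)
    (ω : V →ₗ[ℝ] V →ₗ[ℝ] ℝ) (hskew : ∀ x y : V, ω x y = - ω y x)
    (hnd : ∀ x : V, (∀ y : V, ω x y = 0) → x = 0)
    (φ : V →ₗ[ℝ] (V →ₗ[ℝ] V))
    (hconf : ∀ z : V, ∃ c : ℝ, ∀ a b : V, ω (φ z a) b + ω a (φ z b) = c * ω a b)
    (v : V) (hv : ∀ a b : V, φ a b - φ b a = ω a b • v) :
    ∀ z a b : V, ω (φ z a) b + ω a (φ z b) = ω v z * ω a b := by
  intro z a b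
  obtain ⟨p, q, hzp, hzq, hpq⟩ := exists_orthogonal_apply_ne_zero (by omega) ω hnd z
  obtain ⟨cz, hz⟩ := hconf z
  obtain ⟨cp, hp⟩ := hconf p
  obtain ⟨cq, hq⟩ := hconf q
  rw [← IsConformallySymplectic.factor_eq hskew hv hz hp hq hzp hzq hpq]
  exact hz a b
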